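/- arXiv:2311.06821 — 2 statements merged into one kernel-verified Lean document; each statement's English description precedes it below -/
import Mathlib

section
/- Let n ≥ 1, 1 ≤ ℓ ≤ n and p ≥ 0. Let A ∈ M_n(ℝ⟦x⟧) be written in blocks A = [[A₁₁, A₁₂],[A₂₁, A₂₂]] with A₁₁ of size ℓ×ℓ and A₂₂ of size (n−ℓ)×(n−ℓ), and let G(x) = xI_ℓ ⊕ I_{n−ℓ}. Then, computing in matrices over the field of formal Laurent series ℝ((x)) (with ′ the formal derivative taken entrywise), G⁻¹·A·G − x^{p+1}·G⁻¹·G′ = [[A₁₁ − x^p I_ℓ, x⁻¹·A₁₂],[x·A₂₁, A₂₂]]; consequently the following are equivalent: (a) all entries of G⁻¹AG − x^{p+1}G⁻¹G′ lie in ℝ⟦x⟧; (b) every entry of A₁₂ is divisible by x; (c) the formal derivation ξ of ℝ⟦x,y₁,…,y_n⟧ defined by ξ(x) = x^{p+1} and ξ(y_i) = (A(x)·y)_i maps the ideal (x, y₁,…,y_ℓ) into itself (i.e. the formal vector field x^{p+1}∂_x + (A(x)·y)·∂_y leaves the linear subspace {x = 0, y₁ = ⋯ = y_ℓ = 0} formally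 invariant). -/
open scoped Topology
open Filter Set

noncomputable section

/-! ### Θ embedding and block matrices -/

/-- `Θ : ℂ → M₂(ℝ)`, `a+bi ↦ aI₂ + bJ₂`. -/
def theta (z : ℂ) : Matrix (Fin 2) (Fin 2) ℝ :=
  Matrix.of ![![z.re, -z.im], ![z.im, z.re]]

/-- Block index type `(Fin n₁ × Fin 2) ⊕ Fin n₂` for matrices `Θ(·) ⊕ ·`. -/
abbrev BIdx (n₁ n₂ : ℕ) := (Fin n₁ × Fin 2) ⊕ Fin n₂

/-- Real part of a complex polynomial, as a real polynomial. -/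
def reP (P : Polynomial ℂ) : Polynomial ℝ :=
  ∑ k ∈ Finset.range (P.natDegree + 1), Polynomial.C ((P.coeff k).re) * Polynomial.X ^ k

/-- Imaginary part of a complex polynomial, as a real polynomial. -/
def imP (P : Polynomial ℂ) : Polynomial ℝ :=
  ∑ k ∈ Finset.range (P.natDegree + 1), Polynomial.C ((P.coeff k).im) * Polynomial.X ^ k

/-- Order (valuation at 0) of a real polynomial, `⊤` for the zero polynomial. -/
def ordP (P : Polynomial ℝ) : ℕ∞ :=
  if P = 0 then ⊤ else (P.rootMultiplicity 0 : ℕ∞)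

/-- `P > 0`: `P` is eventually positive as `x → 0⁺`. -/
def evPos (P : Polynomial ℝ) : Prop :=
  ∀ᶠ x in 𝓝[>] (0 : ℝ), 0 < P.eval x

/-- `Θ` of a complex polynomial, as a 2×2 matrix of real polynomials. -/
def thetaPoly (P : Polynomial ℂ) : Matrix (Fin 2) (Fin 2) (Polynomial ℝ) :=
  Matrix.of ![![reP P, -imP P], ![imP P, reP P]]

/-- The exponential part `D = Θ(diag c) ⊕ diag d` as a matrix of real polynomials. -/
def expPartPoly {n₁ n₂ : ℕ} (c : Fin n₁ → Polynomial ℂ) (d : Fin n₂ → Polynomial ℝ) :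
    Matrix (BIdx n₁ n₂) (BIdx n₁ n₂) (Polynomial ℝ) :=
  Matrix.of fun i j =>
    match i, j with
    | Sum.inl (j₁, a), Sum.inl (k₁, b) => if j₁ = k₁ then thetaPoly (c j₁) a b else 0
    | Sum.inr j₁, Sum.inr k₁ => if j₁ = k₁ then d j₁ else 0
    | _, _ => 0

/-- The exponential part evaluated at `x : ℝ`. -/
def expPart {n₁ n₂ : ℕ} (c : Fin n₁ → Polynomial ℂ) (d : Fin n₂ → Polynomial ℝ) (x : ℝ) :
    Matrix (BIdx n₁ n₂) (BIdx n₁ n₂) ℝ :=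
  (expPartPoly c d).map (Polynomial.eval x)

/-- A residual part `C = Θ(C') ⊕ E`. -/
def resPart {n₁ n₂ : ℕ} (C' : Matrix (Fin n₁) (Fin n₁) ℂ) (E : Matrix (Fin n₂) (Fin n₂) ℝ) :
    Matrix (BIdx n₁ n₂) (BIdx n₁ n₂) ℝ :=
  Matrix.of fun i j =>
    match i, j with
    | Sum.inl (j₁, a), Sum.inl (k₁, b) => theta (C' j₁ k₁) a b
    | Sum.inr j₁, Sum.inr k₁ => E j₁ k₁
    | _, _ => 0

/-- Compatibility of the residual blocks `(C', E)` with the exponential data `(c, d)`. -/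
def Compatible {n₁ n₂ : ℕ} (c : Fin n₁ → Polynomial ℂ) (d : Fin n₂ → Polynomial ℝ)
    (C' : Matrix (Fin n₁) (Fin n₁) ℂ) (E : Matrix (Fin n₂) (Fin n₂) ℝ) : Prop :=
  (∀ j k, c j ≠ c k → C' j k = 0) ∧ (∀ j k, d j ≠ d k → E j k = 0)

/-- degrees of all entries of the exponential data are `≤ q - 1`. -/
def DegLT (q : ℕ) {n₁ n₂ : ℕ} (c : Fin n₁ → Polynomial ℂ) (d : Fin n₂ → Polynomial ℝ) : Prop :=
  (∀ j, (c j).degree < (q : ℕ)) ∧ ∀ j, (d j).degree < (q : ℕ)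

/-- The complex spectrum of a real square matrix. -/
def cSpec {ι : Type*} [Fintype ι] [DecidableEq ι] (C : Matrix ι ι ℝ) : Set ℂ :=
  spectrum ℂ (C.map fun r : ℝ => (r : ℂ))

/-- Good spectrum: no two complex eigenvalues differ by a nonzero integer. -/
def GoodSpec {ι : Type*} [Fintype ι] [DecidableEq ι] (C : Matrix ι ι ℝ) : Prop :=
  ∀ μ ∈ cSpec C, ∀ ν ∈ cSpec C, ∀ k : ℤ, k ≠ 0 → μ - ν ≠ (k : ℂ)

/-- All complex eigenvalues have strictly negative real part. -/
def NegSpec {ι : Type*} [Fintype ι] [DecidableEq ι] (C : Matrix ι ι ℝ) : Prop :=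
  ∀ μ ∈ cSpec C, μ.re < 0

/-- No dominant rotation: `ord (Re c_j) ≤ ord (Im c_j)` for every `j`. -/
def NoDominantRotation {n₁ : ℕ} (c : Fin n₁ → Polynomial ℂ) : Prop :=
  ∀ j, ordP (reP (c j)) ≤ ordP (imP (c j))

/-- The unstability index `u(D)`. -/
def uIndex {n₁ n₂ : ℕ} (c : Fin n₁ → Polynomial ℂ) (d : Fin n₂ → Polynomial ℝ) : ℕ :=
  2 * Set.ncard {j : Fin n₁ | evPos (reP (c j))} + Set.ncard {j : Fin n₂ | evPos (d j)}

/-! ### Power series utilities -/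

/-- Formal derivative of a power series. -/
def dX (f : PowerSeries ℝ) : PowerSeries ℝ :=
  PowerSeries.mk fun k => (k + 1 : ℝ) * PowerSeries.coeff (R := ℝ) (k + 1) f

/-- A polynomial viewed as a power series. -/
def polyPS (p : Polynomial ℝ) : PowerSeries ℝ :=
  PowerSeries.mk fun k => p.coeff k

/-- Ramification `f(x) ↦ f(x^r)` on power series. -/
def ramify (r : ℕ) (f : PowerSeries ℝ) : PowerSeries ℝ :=
  PowerSeries.mk fun k => if r ∣ k then PowerSeries.coeff (R := ℝ) (k / r) f else 0

/-- Evaluation at `x` of the truncation to degree `≤ N` of a power series (the `N`-jet). -/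
def jet (N : ℕ) (f : PowerSeries ℝ) (x : ℝ) : ℝ :=
  ∑ k ∈ Finset.range (N + 1), PowerSeries.coeff (R := ℝ) k f * x ^ k

/-! ### Taylor series of smooth functions and substitution of formal curves -/

variable {ι : Type*} [Fintype ι] [DecidableEq ι]
variable {F : Type*} [NormedAddCommGroup F] [NormedSpace ℝ F]

/-- Partial derivative in the `x` direction. -/
def pdX (f : ℝ × (ι → ℝ) → F) : ℝ × (ι → ℝ) → F := fun p => fderiv ℝ f p (1, 0)

/-- Partial derivative in the `y i` direction. -/
def pdY (i : ι) (f : ℝ × (ι → ℝ) → F) : ℝ × (ι → ℝ) → F :=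
  fun p => fderiv ℝ f p (0, Pi.single i 1)

/-- Iterated mixed partial derivative `∂_x^{α₀} ∂_y^{α} f`. -/
def mDeriv (α₀ : ℕ) (α : ι → ℕ) (f : ℝ × (ι → ℝ) → F) : ℝ × (ι → ℝ) → F :=
  (pdX)^[α₀] ((Finset.univ : Finset ι).toList.foldr (fun i g => (pdY i)^[α i] g) f)

/-- The Taylor series at the origin of a smooth germ `f : ℝ × ℝ^ι → ℝ`,
as a multivariate formal power series in the variables `Option ι`
(`none` is the `x` variable, `some i` is `y i`). -/
def taylorSeries (f : ℝ × (ι → ℝ) → ℝ) : MvPowerSeries (Option ι) ℝ :=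
  fun dd : Option ι →₀ ℕ =>
    (((dd none).factorial : ℝ) * ∏ i : ι, ((dd (some i)).factorial : ℝ))⁻¹ *
      mDeriv (dd none) (fun i => dd (some i)) f (0, 0)

/-- Substitution of a tuple `c` of one-variable power series (each of positive order)
into a multivariate power series. -/
def substC (c : Option ι → PowerSeries ℝ) (g : MvPowerSeries (Option ι) ℝ) : PowerSeries ℝ :=
  PowerSeries.mk fun k =>
    ∑ dd ∈ Finset.Iic ((Finsupp.equivFunOnFinite).symm fun _ : Option ι => k),
      MvPowerSeries.coeff (R := ℝ) dd g * PowerSeries.coeff (R := ℝ) k (∏ v : Option ι, c v ^ dd v)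

/-- The formal curve `(x, Γ(x))` as a tuple of one-variable power series. -/
def curveOf (Γ : ι → PowerSeries ℝ) : Option ι → PowerSeries ℝ :=
  fun v => v.elim PowerSeries.X Γ

end

/-- A one-variable power series viewed as a multivariate power series in the variables
`Option (Fin n)`, depending only on the variable `none` (the `x` variable). -/
noncomputable def embX {n : ℕ} (f : PowerSeries ℝ) : MvPowerSeries (Option (Fin n)) ℝ :=
  fun dd : Option (Fin n) →₀ ℕ =>
    if dd = Finsupp.single none (dd none) then PowerSeries.coeff (R := ℝ) (dd none) f else 0

/-- The ideal `(x, y₁, …, y_ℓ)` of `ℝ⟦x, y₁, …, y_n⟧`. -/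
noncomputable def idealXY (n ℓ : ℕ) : Ideal (MvPowerSeries (Option (Fin n)) ℝ) :=
  Ideal.span ({MvPowerSeries.X none} ∪
    {g | ∃ j : Fin n, (j : ℕ) < ℓ ∧ g = MvPowerSeries.X (some j)})

/-! Conjugation by the diagonal matrix `G` multiplies the `(i, j)` entry by `G_j / G_i`, and
`G⁻¹G′` is diagonal with entry `x⁻¹` in the first `ℓ` places; this gives the block formula, in
which only the block `x⁻¹A₁₂` can fail to consist of power series. For the derivation,
`ξ(x) = x^{p+1}` always lies in `(x, y₁, …, y_ℓ)`, while for `i ≤ ℓ` the coefficient of `y_k`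
(`k > ℓ`) in `ξ(y_i)` is `A_ik(0)`, and every element of the ideal has zero coefficient on monomials
free of `x, y₁, …, y_ℓ`. -/

theorem Matrix.inv_diagonal_of_ne_zero {ι K : Type*} [Fintype ι] [DecidableEq ι] [Field K]
    {d : ι → K} (hd : ∀ i, d i ≠ 0) :
    (Matrix.diagonal d)⁻¹ = Matrix.diagonal fun i => (d i)⁻¹ :=
  Matrix.inv_eq_left_inv <| by
    rw [Matrix.diagonal_mul_diagonal, ← Matrix.diagonal_one]
    exact congrArg Matrix.diagonal (funext fun i => inv_mul_cancel₀ (hd i))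

theorem Matrix.diagonal_gauge_apply {ι K : Type*} [Fintype ι] [DecidableEq ι] [Field K]
    {d : ι → K} (hd : ∀ i, d i ≠ 0) (e : ι → K) (c : K) (M : Matrix ι ι K) (i j : ι) :
    ((Matrix.diagonal d)⁻¹ * M * Matrix.diagonal d -
        c • ((Matrix.diagonal d)⁻¹ * Matrix.diagonal e)) i j =
      (d i)⁻¹ * M i j * d j - if i = j then c * e i / d i else 0 := by
  rw [Matrix.inv_diagonal_of_ne_zero hd]
  simp only [Matrix.sub_apply, Matrix.smul_apply, Matrix.mul_diagonal, Matrix.diagonal_mul,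
    Matrix.diagonal_mul_diagonal, Matrix.diagonal_apply, smul_eq_mul]
  split_ifs <;> ring

theorem inv_mul_mem_range_iff_dvd {R K : Type*} [CommRing R] [Field K] {φ : R →+* K}
    (hφ : Function.Injective φ) {g : R} (hg : g ≠ 0) (f : R) :
    (φ g)⁻¹ * φ f ∈ Set.range φ ↔ g ∣ f := by
  have hφg : φ g ≠ 0 := (map_ne_zero_iff φ hφ).mpr hg
  constructor
  · rintro ⟨h, hh⟩
    refine ⟨h, hφ ?_⟩
    rw [map_mul, hh, mul_inv_cancel_left₀ hφg]
  · rintro ⟨h, rfl⟩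
    exact ⟨h, by rw [map_mul, inv_mul_cancel_left₀ hφg]⟩

theorem MvPowerSeries.coeff_eq_zero_of_mem_span_X {σ R : Type*} [CommSemiring R] {S : Set σ}
    {g : MvPowerSeries σ R} (hg : g ∈ Ideal.span (MvPowerSeries.X '' S)) {d : σ →₀ ℕ}
    (hd : ∀ s ∈ S, d s = 0) : MvPowerSeries.coeff d g = 0 := by
  classical
  induction hg using Submodule.span_induction generalizing d with
  | mem x hx =>
    obtain ⟨s, hs, rfl⟩ := hx
    rw [MvPowerSeries.coeff_X, if_neg]
    rintro rfl
    simpa using hd s hs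
  | zero => simp
  | add x y _ _ hx hy => rw [map_add, hx hd, hy hd, add_zero]
  | smul a x _ hx =>
    rw [smul_eq_mul, MvPowerSeries.coeff_mul]
    refine Finset.sum_eq_zero fun q hq => ?_
    have hq₂ : q.2 ≤ d := (Finset.HasAntidiagonal.mem_antidiagonal.mp hq) ▸ le_add_self
    rw [hx fun s hs => Nat.eq_zero_of_le_zero (hd s hs ▸ hq₂ s), mul_zero]

theorem coeff_eq_zero_of_mem_idealXY {n ℓ : ℕ} {g : MvPowerSeries (Option (Fin n)) ℝ}
    (hg : g ∈ idealXY n ℓ) {d : Option (Fin n) →₀ ℕ}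
    (hd : ∀ v : Option (Fin n), (∀ j ∈ v, (j : ℕ) < ℓ) → d v = 0) :
    MvPowerSeries.coeff d g = 0 := by
  refine MvPowerSeries.coeff_eq_zero_of_mem_span_X (Ideal.span_mono ?_ hg) hd
  rintro _ (rfl | ⟨j, hj, rfl⟩)
  · exact ⟨none, fun _ h => (Option.not_mem_none _ h).elim, rfl⟩
  · exact ⟨some j, fun _ h => Option.mem_some_iff.mp h ▸ hj, rfl⟩

theorem coeff_embX {n : ℕ} (f : PowerSeries ℝ) (d : Option (Fin n) →₀ ℕ) :
    MvPowerSeries.coeff d (embX f) =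
      if d = Finsupp.single none (d none) then PowerSeries.coeff (d none) f else 0 :=
  rfl

theorem X_none_dvd_embX {n : ℕ} {f : PowerSeries ℝ} (hf : PowerSeries.X ∣ f) :
    MvPowerSeries.X none ∣ embX (n := n) f := by
  rw [MvPowerSeries.X_dvd_iff]
  intro m hm
  rw [coeff_embX, hm]
  split_ifs
  · rwa [PowerSeries.coeff_zero_eq_constantCoeff_apply, ← PowerSeries.X_dvd_iff]
  · rfl

theorem embX_mem_idealXY {n ℓ : ℕ} {f : PowerSeries ℝ} (hf : PowerSeries.X ∣ f) :
    embX (n := n) f ∈ idealXY n ℓ := by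
  obtain ⟨g, hg⟩ := X_none_dvd_embX hf
  rw [hg]
  exact Ideal.mul_mem_right _ _ (Ideal.subset_span (Or.inl rfl))

theorem coeff_single_sum_embX_mul_X {n : ℕ} (a : Fin n → PowerSeries ℝ) (k : Fin n) :
    MvPowerSeries.coeff (Finsupp.single (some k) 1)
      (∑ k', embX (a k') * MvPowerSeries.X (some k')) = PowerSeries.constantCoeff (a k) := by
  rw [map_sum, Finset.sum_eq_single k]
  · simp [MvPowerSeries.X, MvPowerSeries.coeff_mul_monomial, coeff_embX]
  · intro k' _ hk'
    simp [MvPowerSeries.X, MvPowerSeries.coeff_mul_monomial, Finsupp.single_le_iff, hk']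
  · simp

theorem sum_embX_mul_X_mem_idealXY_iff {n ℓ : ℕ} (a : Fin n → PowerSeries ℝ) :
    (∑ k, embX (a k) * MvPowerSeries.X (some k)) ∈ idealXY n ℓ ↔
      ∀ k : Fin n, ¬ (k : ℕ) < ℓ → PowerSeries.X ∣ a k := by
  constructor
  · intro h k hk
    rw [PowerSeries.X_dvd_iff, ← coeff_single_sum_embX_mul_X]
    refine coeff_eq_zero_of_mem_idealXY h fun v hv => Finsupp.single_eq_of_ne ?_
    rintro rfl
    exact hk (hv k rfl)
  · intro h
    refine Ideal.sum_mem _ fun k _ => ?_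
    by_cases hk : (k : ℕ) < ℓ
    · exact Ideal.mul_mem_left _ _ (Ideal.subset_span (Or.inr ⟨k, hk, rfl⟩))
    · exact Ideal.mul_mem_right _ _ (embX_mem_idealXY (h k hk))

theorem diagonal_monomial_gauge_transform_general
    (n ℓ p : ℕ)
    (A : Matrix (Fin n) (Fin n) (PowerSeries ℝ)) :
    let ofPS : PowerSeries ℝ →+* LaurentSeries ℝ := HahnSeries.ofPowerSeries ℤ ℝ
    let XK : LaurentSeries ℝ := ofPS PowerSeries.X
    let G : Matrix (Fin n) (Fin n) (LaurentSeries ℝ) :=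
      Matrix.diagonal fun i => if (i : ℕ) < ℓ then XK else 1
    let G' : Matrix (Fin n) (Fin n) (LaurentSeries ℝ) :=
      Matrix.diagonal fun i => if (i : ℕ) < ℓ then 1 else 0
    let AK : Matrix (Fin n) (Fin n) (LaurentSeries ℝ) := A.map ofPS
    let L : Matrix (Fin n) (Fin n) (LaurentSeries ℝ) :=
      G⁻¹ * AK * G - XK ^ (p + 1) • (G⁻¹ * G')
    (L = Matrix.of fun i j : Fin n =>
        if (i : ℕ) < ℓ then
          (if (j : ℕ) < ℓ then AK i j - (if i = j then XK ^ p else 0) else XK⁻¹ * AK i j)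
        else (if (j : ℕ) < ℓ then XK * AK i j else AK i j)) ∧
    ((∀ i j, L i j ∈ Set.range ofPS) ↔
      (∀ i j : Fin n, (i : ℕ) < ℓ → ¬ (j : ℕ) < ℓ → PowerSeries.X ∣ A i j)) ∧
    ((∀ i j, L i j ∈ Set.range ofPS) ↔
      (embX (n := n) (PowerSeries.X ^ (p + 1)) ∈ idealXY n ℓ ∧
        ∀ j : Fin n, (j : ℕ) < ℓ →
          (∑ k : Fin n, embX (A j k) * MvPowerSeries.X (some k)) ∈ idealXY n ℓ)) := by
  intro ofPS XK G G' AK L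
  have hinj : Function.Injective ofPS := HahnSeries.ofPowerSeries_injective
  have hXK : XK ≠ 0 := (map_ne_zero_iff ofPS hinj).mpr PowerSeries.X_ne_zero
  have hG_ne : ∀ i : Fin n, (if (i : ℕ) < ℓ then XK else 1) ≠ 0 := fun i => by
    split_ifs
    exacts [hXK, one_ne_zero]
  have hL : L = Matrix.of fun i j : Fin n =>
      if (i : ℕ) < ℓ then
        (if (j : ℕ) < ℓ then AK i j - (if i = j then XK ^ p else 0) else XK⁻¹ * AK i j)
      else (if (j : ℕ) < ℓ then XK * AK i j else AK i j) := by
    ext i j : 1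
    change (G⁻¹ * AK * G - XK ^ (p + 1) • (G⁻¹ * G')) i j = _
    rw [Matrix.diagonal_gauge_apply hG_ne]
    obtain rfl | hij := eq_or_ne i j
    · simp only [Matrix.of_apply, if_true]
      split_ifs <;> field_simp <;> ring
    · simp only [Matrix.of_apply, if_neg hij, sub_zero]
      split_ifs <;> field_simp
  have hdvd : (∀ i j, L i j ∈ Set.range ofPS) ↔
      ∀ i j : Fin n, (i : ℕ) < ℓ → ¬ (j : ℕ) < ℓ → PowerSeries.X ∣ A i j := by
    refine forall_congr' fun i => forall_congr' fun j => ?_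
    rw [hL, Matrix.of_apply]
    by_cases hi : (i : ℕ) < ℓ <;> by_cases hj : (j : ℕ) < ℓ <;>
      simp only [hi, hj, if_true, if_false, not_true, not_false_eq_true, true_implies,
        false_implies, iff_true]
    · exact ⟨A i j - if i = j then PowerSeries.X ^ p else 0, by split_ifs <;> simp [AK, XK]⟩
    · exact inv_mul_mem_range_iff_dvd hinj PowerSeries.X_ne_zero (A i j)
    · exact ⟨PowerSeries.X * A i j, map_mul ofPS _ _⟩
    · exact ⟨A i j, rfl⟩
  refine ⟨hL, hdvd, hdvd.trans ?_⟩
  simp only [embX_mem_idealXY (dvd_pow_self _ (Nat.succ_ne_zero p)), true_and,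
    sum_embX_mul_X_mem_idealXY_iff]
  exact forall_congr' fun i => ⟨fun h hi k => h k hi, fun h k hi => h hi k⟩

/-- key computation of Proposition 2.7: the gauge transform of the linear
system `x^{p+1}y′ = A(x)y` by `G = xI_ℓ ⊕ I_{n−ℓ}`, computed over formal Laurent series, and
the equivalence between admissibility of `G`, divisibility of the upper-right block of `A`
by `x`, and formal invariance of `{x = 0, y₁ = ⋯ = y_ℓ = 0}` for the associated derivation. -/
theorem diagonal_monomial_gauge_transform
    (n ℓ p : ℕ) (hn : 1 ≤ n) (hℓ1 : 1 ≤ ℓ) (hℓn : ℓ ≤ n)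
    (A : Matrix (Fin n) (Fin n) (PowerSeries ℝ)) :
    let ofPS : PowerSeries ℝ →+* LaurentSeries ℝ := HahnSeries.ofPowerSeries ℤ ℝ
    let XK : LaurentSeries ℝ := ofPS PowerSeries.X
    let G : Matrix (Fin n) (Fin n) (LaurentSeries ℝ) :=
      Matrix.diagonal fun i => if (i : ℕ) < ℓ then XK else 1
    let G' : Matrix (Fin n) (Fin n) (LaurentSeries ℝ) :=
      Matrix.diagonal fun i => if (i : ℕ) < ℓ then 1 else 0
    let AK : Matrix (Fin n) (Fin n) (LaurentSeries ℝ) := A.map ofPS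
    let L : Matrix (Fin n) (Fin n) (LaurentSeries ℝ) :=
      G⁻¹ * AK * G - XK ^ (p + 1) • (G⁻¹ * G')
    (L = Matrix.of fun i j : Fin n =>
        if (i : ℕ) < ℓ then
          (if (j : ℕ) < ℓ then AK i j - (if i = j then XK ^ p else 0) else XK⁻¹ * AK i j)
        else (if (j : ℕ) < ℓ then XK * AK i j else AK i j)) ∧
    ((∀ i j, L i j ∈ Set.range ofPS) ↔
      (∀ i j : Fin n, (i : ℕ) < ℓ → ¬ (j : ℕ) < ℓ → PowerSeries.X ∣ A i j)) ∧
    ((∀ i j, L i j ∈ Set.range ofPS) ↔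
      (embX (n := n) (PowerSeries.X ^ (p + 1)) ∈ idealXY n ℓ ∧
        ∀ j : Fin n, (j : ℕ) < ℓ →
          (∑ k : Fin n, embX (A j k) * MvPowerSeries.X (some k)) ∈ idealXY n ℓ)) :=
  diagonal_monomial_gauge_transform_general n ℓ p A
end

section
/- Let q ≥ 1, β > 0, n ≥ 1 and t₀ ∈ ℝ. Let a, b : (−∞,t₀] → (0,∞) and u, v : (−∞,t₀] → ℝ^n be C¹ with a′(t) = a(t)^{q+1} and b′(t) = b(t)^{q+1} for all t, and suppose |a(t) − b(t)| + ‖u(t) − v(t)‖ = O(e^{βt}) as t → −∞. Then a = b; moreover a is a strictly increasing C¹ bijection from (−∞,t₀] onto an interval (0,c], a(t) → 0 as t → −∞, and, writing ū(x) := u(a⁻¹(x)) and v̄(x) := v(a⁻¹(x)) for x ∈ (0,c], one has: for every ℓ ∈ ℕ, ‖ū(x) − v̄(x)‖ = o(x^ℓ) as x → 0⁺. -/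
open scoped Topology
open Filter Set

/-!
A positive solution of `x' = x ^ (q + 1)` satisfies `(x ^ q)⁻¹ = K - q t` for a constant `K`; it is
therefore an increasing bijection onto `(0, x t₀]` whose inverse is the natural time
`(K - (x ^ q)⁻¹) / q`. For two such solutions with constants `K` and `L`,
`L - K = (a ^ q - b ^ q) (K - q t) (L - q t)` is `O(e^{βt})` times a quadratic in `t`, so `K = L`.
Flatness comes from `e^{β t(x)} = e^{βK/q} e^{-(β/q) x^{-q}}`, which is `o(x ^ ℓ)` for every `ℓ`.
-/

open Asymptotics Real

lemma inv_pow_add_mul_eq_of_hasDerivWithinAt {q : ℕ} {s : Set ℝ} {a : ℝ → ℝ} (hs : Convex ℝ s)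
    (hpos : ∀ t ∈ s, 0 < a t) (ha : ∀ t ∈ s, HasDerivWithinAt a (a t ^ (q + 1)) s t)
    {t₁ t : ℝ} (ht₁ : t₁ ∈ s) (ht : t ∈ s) :
    (a t ^ q)⁻¹ + q * t = (a t₁ ^ q)⁻¹ + q * t₁ := by
  have hderiv : ∀ r ∈ s, HasDerivWithinAt (fun r => (a r ^ q)⁻¹ + q * r) 0 s r := by
    intro r hr
    have hne : a r ^ q ≠ 0 := pow_ne_zero _ (hpos r hr).ne'
    refine (((ha r hr).fun_pow q).fun_inv hne).fun_add
      ((hasDerivWithinAt_id r s).const_mul (q : ℝ)) |>.congr_deriv ?_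
    rcases q with _ | k
    · simp
    · rw [Nat.add_sub_cancel]
      field_simp
      ring
  have := hs.norm_image_sub_le_of_norm_hasDerivWithin_le (C := 0) hderiv (by simp) ht₁ ht
  simpa [sub_eq_zero] using this

lemma tendsto_inv_pow_nhdsGT_zero {q : ℕ} (hq : q ≠ 0) :
    Tendsto (fun x : ℝ => (x ^ q)⁻¹) (𝓝[>] 0) atTop := by
  simpa only [Function.comp_def, inv_pow] using
    (tendsto_pow_atTop (α := ℝ) hq).comp tendsto_inv_nhdsGT_zero

lemma isLittleO_const_sub_mul_exp_neg_mul_atBot {c : ℝ} (hc : 0 < c) (A B : ℝ) :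
    (fun t => A - B * t) =o[atBot] fun t => exp (-(c * t)) := by
  have h : (fun s : ℝ => A * s ^ 0 + B * s ^ 1) =o[atTop] fun s => exp (c * s) :=
    ((isLittleO_pow_exp_pos_mul_atTop 0 hc).const_mul_left A).add
      ((isLittleO_pow_exp_pos_mul_atTop 1 hc).const_mul_left B)
  simpa [Function.comp_def, mul_neg, sub_eq_add_neg] using
    h.comp_tendsto tendsto_neg_atBot_atTop

lemma isLittleO_exp_neg_mul_inv_pow {q : ℕ} (hq : q ≠ 0) {c : ℝ} (hc : 0 < c) (ℓ : ℕ) :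
    (fun x => exp (-(c * (x ^ q)⁻¹))) =o[𝓝[>] 0] fun x => x ^ ℓ := by
  have h := ((isLittleO_pow_exp_pos_mul_atTop (ℓ + 1) hc).comp_tendsto
    (tendsto_inv_pow_nhdsGT_zero hq)).inv_rev (by
      filter_upwards [self_mem_nhdsWithin] with x (hx : 0 < x)
      simp [hx.ne'])
  refine (h.congr (fun x => by simp [exp_neg]) (fun x => by simp [← pow_mul])).trans
    ((isLittleO_pow_pow (m := ℓ) (n := q * (ℓ + 1)) ?_).mono nhdsWithin_le_nhds)
  nlinarith [Nat.one_le_iff_ne_zero.mpr hq]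

noncomputable def naturalTime (q : ℕ) (K x : ℝ) : ℝ := (K - (x ^ q)⁻¹) / q

lemma tendsto_naturalTime_nhdsGT_zero {q : ℕ} (hq : q ≠ 0) (K : ℝ) :
    Tendsto (naturalTime q K) (𝓝[>] 0) atBot :=
  (tendsto_atBot_add_const_left _ K <| tendsto_neg_atTop_atBot.comp
    (tendsto_inv_pow_nhdsGT_zero hq)).atBot_div_const (Nat.cast_pos.mpr (Nat.pos_of_ne_zero hq))

lemma isLittleO_exp_mul_naturalTime {q : ℕ} (hq : q ≠ 0) {β : ℝ} (hβ : 0 < β) (K : ℝ) (ℓ : ℕ) :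
    (fun x => exp (β * naturalTime q K x)) =o[𝓝[>] 0] fun x => x ^ ℓ := by
  have hq' : (0 : ℝ) < q := Nat.cast_pos.mpr (Nat.pos_of_ne_zero hq)
  refine ((isLittleO_exp_neg_mul_inv_pow hq (div_pos hβ hq') ℓ).const_mul_left
    (exp (β * K / q))).congr_left fun x => ?_
  rw [naturalTime, ← exp_add]
  congr 1
  field_simp
  ring

section ExplicitSolution

variable {q : ℕ} {t₀ K : ℝ} {a : ℝ → ℝ}

lemma apply_eq_iff_eq_naturalTime (hq : q ≠ 0) (hpos : ∀ t ∈ Iic t₀, 0 < a t)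
    (hK : ∀ t ∈ Iic t₀, (a t ^ q)⁻¹ = K - q * t) {t x : ℝ} (ht : t ∈ Iic t₀) (hx : 0 < x) :
    a t = x ↔ t = naturalTime q K x := by
  have hq' : (q : ℝ) ≠ 0 := Nat.cast_ne_zero.mpr hq
  rw [← pow_left_inj₀ (hpos t ht).le hx.le hq, ← inv_inj, hK t ht, naturalTime,
    eq_div_iff hq']
  constructor <;> intro h <;> linarith

lemma strictMonoOn_of_inv_pow_eq (hq : q ≠ 0) (hpos : ∀ t ∈ Iic t₀, 0 < a t)
    (hK : ∀ t ∈ Iic t₀, (a t ^ q)⁻¹ = K - q * t) : StrictMonoOn a (Iic t₀) := by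
  intro s hs t ht hst
  have hq' : (0 : ℝ) < q := Nat.cast_pos.mpr (Nat.pos_of_ne_zero hq)
  rw [← pow_lt_pow_iff_left₀ (hpos s hs).le (hpos t ht).le hq,
    ← inv_lt_inv₀ (pow_pos (hpos t ht) q) (pow_pos (hpos s hs) q), hK s hs, hK t ht]
  nlinarith

lemma tendsto_zero_of_inv_pow_eq (hq : q ≠ 0) (hpos : ∀ t ∈ Iic t₀, 0 < a t)
    (hK : ∀ t ∈ Iic t₀, (a t ^ q)⁻¹ = K - q * t) : Tendsto a atBot (𝓝 0) := by
  have hq' : (0 : ℝ) < q := Nat.cast_pos.mpr (Nat.pos_of_ne_zero hq)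
  have hpow : Tendsto (fun t => (K - q * t)⁻¹) atBot (𝓝 0) :=
    tendsto_inv_atTop_zero.comp <| tendsto_atTop_add_const_left _ K <|
      tendsto_neg_atBot_atTop.comp (tendsto_id.const_mul_atBot hq')
  have hroot := hpow.rpow_const (p := (q : ℝ)⁻¹) (Or.inr (inv_nonneg.mpr hq'.le))
  rw [zero_rpow (inv_ne_zero hq'.ne')] at hroot
  refine hroot.congr' ?_
  filter_upwards [eventually_le_atBot t₀] with t ht
  rw [← hK t ht, inv_inv, pow_rpow_inv_natCast (hpos t ht).le hq]

lemma image_Iic_of_inv_pow_eq (hq : q ≠ 0) (hpos : ∀ t ∈ Iic t₀, 0 < a t)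
    (hK : ∀ t ∈ Iic t₀, (a t ^ q)⁻¹ = K - q * t) : a '' Iic t₀ = Ioc 0 (a t₀) := by
  have hmono := strictMonoOn_of_inv_pow_eq hq hpos hK
  refine Subset.antisymm ?_ fun x ⟨hx, hxa⟩ => ?_
  · rintro _ ⟨t, ht, rfl⟩
    exact ⟨hpos t ht, hmono.monotoneOn ht self_mem_Iic ht⟩
  · have hq' : (0 : ℝ) < q := Nat.cast_pos.mpr (Nat.pos_of_ne_zero hq)
    have hτ : naturalTime q K x ∈ Iic t₀ := by
      have : (a t₀ ^ q)⁻¹ ≤ (x ^ q)⁻¹ :=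
        inv_anti₀ (pow_pos hx q) (pow_le_pow_left₀ hx.le hxa q)
      rw [mem_Iic, naturalTime, div_le_iff₀ hq']
      linarith [hK t₀ self_mem_Iic]
    exact ⟨_, hτ, (apply_eq_iff_eq_naturalTime hq hpos hK hτ hx).mpr rfl⟩

lemma eq_of_isBigO_sub_exp (hq : q ≠ 0) {β : ℝ} (hβ : 0 < β) {L : ℝ} {b : ℝ → ℝ}
    (hapos : ∀ t ∈ Iic t₀, 0 < a t) (hbpos : ∀ t ∈ Iic t₀, 0 < b t)
    (hK : ∀ t ∈ Iic t₀, (a t ^ q)⁻¹ = K - q * t) (hL : ∀ t ∈ Iic t₀, (b t ^ q)⁻¹ = L - q * t)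
    (hab : (fun t => a t - b t) =O[atBot] fun t => exp (β * t)) : K = L := by
  have hab₀ : Tendsto (fun t => (a t, b t)) atBot (𝓝 (0, 0)) :=
    (tendsto_zero_of_inv_pow_eq hq hapos hK).prodMk_nhds (tendsto_zero_of_inv_pow_eq hq hbpos hL)
  have hpow : (fun t => a t ^ q - b t ^ q) =O[atBot] fun t => a t - b t :=
    (hasStrictDerivAt_pow q (0 : ℝ)).hasStrictFDerivAt.isBigO_sub.comp_tendsto hab₀
  have hlin (M : ℝ) : (fun t : ℝ => M - q * t) =o[atBot] fun t => exp (-(β / 2 * t)) :=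
    isLittleO_const_sub_mul_exp_neg_mul_atBot (half_pos hβ) M q
  have hprod := (hpow.trans hab).mul_isLittleO ((hlin K).mul (hlin L))
  have hconst : (fun _ : ℝ => L - K) =o[atBot] fun _ => (1 : ℝ) := by
    refine hprod.congr' ?_ (.of_eq ?_)
    · filter_upwards [eventually_le_atBot t₀] with t ht
      have hdiff : L - K = (b t ^ q)⁻¹ - (a t ^ q)⁻¹ := by rw [hK t ht, hL t ht]; ring
      rw [hdiff, ← hK t ht, ← hL t ht]
      have := pow_pos (hapos t ht) q
      have := pow_pos (hbpos t ht) q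
      field_simp
    · ext t
      rw [← exp_add, ← exp_add]
      ring_nf
      exact exp_zero
  linarith [tendsto_const_nhds_iff.mp ((isLittleO_one_iff ℝ).mp hconst)]

end ExplicitSolution

theorem accompanying_trajectories_flat_contact_general
    (q : ℕ) (hq : 1 ≤ q) (β : ℝ) (hβ : 0 < β) (n : ℕ) (t₀ : ℝ)
    (a b : ℝ → ℝ) (u v : ℝ → Fin n → ℝ)
    (hapos : ∀ t ∈ Iic t₀, 0 < a t) (hbpos : ∀ t ∈ Iic t₀, 0 < b t)
    (ha : ∀ t ∈ Iic t₀, HasDerivWithinAt a (a t ^ (q + 1)) (Iic t₀) t)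
    (hb : ∀ t ∈ Iic t₀, HasDerivWithinAt b (b t ^ (q + 1)) (Iic t₀) t)
    (hclose : (fun t => |a t - b t| + ‖u t - v t‖) =O[atBot] fun t => Real.exp (β * t)) :
    (∀ t ∈ Iic t₀, a t = b t) ∧
    StrictMonoOn a (Iic t₀) ∧
    a '' Iic t₀ = Ioc 0 (a t₀) ∧
    Tendsto a atBot (𝓝 0) ∧
    ∀ g : ℝ → ℝ, (∀ x ∈ Ioc (0 : ℝ) (a t₀), g x ∈ Iic t₀ ∧ a (g x) = x) →
      ∀ ℓ : ℕ, (fun x => u (g x) - v (g x)) =o[𝓝[>] (0 : ℝ)] fun x => x ^ ℓ := by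
  have hq0 : q ≠ 0 := by omega
  obtain ⟨K, hK⟩ : ∃ K, ∀ t ∈ Iic t₀, (a t ^ q)⁻¹ = K - q * t := ⟨_, fun t ht =>
    eq_sub_of_add_eq <| inv_pow_add_mul_eq_of_hasDerivWithinAt (convex_Iic t₀) hapos ha
      self_mem_Iic ht⟩
  obtain ⟨L, hL⟩ : ∃ L, ∀ t ∈ Iic t₀, (b t ^ q)⁻¹ = L - q * t := ⟨_, fun t ht =>
    eq_sub_of_add_eq <| inv_pow_add_mul_eq_of_hasDerivWithinAt (convex_Iic t₀) hbpos hb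
      self_mem_Iic ht⟩
  have hab_exp : (fun t => a t - b t) =O[atBot] fun t => exp (β * t) :=
    (IsBigO.of_bound' (.of_forall fun t => by
      rw [Real.norm_eq_abs, Real.norm_of_nonneg (by positivity)]
      linarith [norm_nonneg (u t - v t)])).trans hclose
  have huv_exp : (fun t => u t - v t) =O[atBot] fun t => exp (β * t) :=
    (IsBigO.of_bound' (.of_forall fun t => by
      rw [Real.norm_of_nonneg (by positivity)]
      linarith [abs_nonneg (a t - b t)])).trans hclose
  have hKL : K = L := eq_of_isBigO_sub_exp hq0 hβ hapos hbpos hK hL hab_exp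
  subst hKL
  refine ⟨fun t ht => (pow_left_inj₀ (hapos t ht).le (hbpos t ht).le hq0).mp
      (inv_inj.mp ((hK t ht).trans (hL t ht).symm)),
    strictMonoOn_of_inv_pow_eq hq0 hapos hK, image_Iic_of_inv_pow_eq hq0 hapos hK,
    tendsto_zero_of_inv_pow_eq hq0 hapos hK, fun g hg ℓ => ?_⟩
  have hg_eq : g =ᶠ[𝓝[>] 0] naturalTime q K := by
    filter_upwards [Ioc_mem_nhdsGT (hapos t₀ self_mem_Iic)] with x hx
    exact (apply_eq_iff_eq_naturalTime hq0 hapos hK (hg x hx).1 hx.1).mp (hg x hx).2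
  have hg_bot : Tendsto g (𝓝[>] 0) atBot :=
    (tendsto_naturalTime_nhdsGT_zero hq0 K).congr' hg_eq.symm
  exact (huv_exp.comp_tendsto hg_bot).trans_isLittleO <|
    (isLittleO_exp_mul_naturalTime hq0 hβ K ℓ).congr' (hg_eq.mono fun x hx => by simp [hx]) .rfl

/-- Proposition 3.3, accompanying trajectories: if two trajectories of a
vector field with `x`-component `x^{q+1}` (`q ≥ 1`) are exponentially close in natural time as
`t → −∞`, then their `x`-components coincide and, after reparametrizing by `x`, they have flat
contact at `x = 0⁺`. -/
theorem accompanying_trajectories_flat_contact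
    (q : ℕ) (hq : 1 ≤ q) (β : ℝ) (hβ : 0 < β) (n : ℕ) (hn : 1 ≤ n) (t₀ : ℝ)
    (a b : ℝ → ℝ) (u v : ℝ → Fin n → ℝ)
    (hapos : ∀ t ∈ Iic t₀, 0 < a t) (hbpos : ∀ t ∈ Iic t₀, 0 < b t)
    (ha : ∀ t ∈ Iic t₀, HasDerivWithinAt a (a t ^ (q + 1)) (Iic t₀) t)
    (hb : ∀ t ∈ Iic t₀, HasDerivWithinAt b (b t ^ (q + 1)) (Iic t₀) t)
    (hu : ContDiffOn ℝ 1 u (Iic t₀)) (hv : ContDiffOn ℝ 1 v (Iic t₀))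
    (hclose : (fun t => |a t - b t| + ‖u t - v t‖) =O[atBot] fun t => Real.exp (β * t)) :
    (∀ t ∈ Iic t₀, a t = b t) ∧
    StrictMonoOn a (Iic t₀) ∧
    a '' Iic t₀ = Ioc 0 (a t₀) ∧
    Tendsto a atBot (𝓝 0) ∧
    ∀ g : ℝ → ℝ, (∀ x ∈ Ioc (0 : ℝ) (a t₀), g x ∈ Iic t₀ ∧ a (g x) = x) →
      ∀ ℓ : ℕ, (fun x => u (g x) - v (g x)) =o[𝓝[>] (0 : ℝ)] fun x => x ^ ℓ :=
  accompanying_trajectories_flat_contact_general q hq β hβ n t₀ a b u v hapos hbpos ha hb hclose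
end
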